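/- Let R be a commutative Noetherian local ring with maximal ideal m, let v be a valuation on R with values in ℕ∪{∞} (i.e., v(fg)=v(f)+v(g), v(f+g)≥min(v(f),v(g)), v(1)=0), extended to ideals by v(a) = min over f∈a of v(f). Suppose a and b are ideals with a + m^l = b + m^l for some positive integer l, and v(a) < l·v(m). Then v(a) = v(b). -/

import Mathlib

/-- A valuation on a commutative ring with values in `ℕ∞ = ℕ ∪ {∞}`. -/
structure NatValuation (R : Type*) [CommRing R] where
  v : R → ℕ∞
  map_mul : ∀ f g : R, v (f * g) = v f + v g
  map_add : ∀ f g : R, min (v f) (v g) ≤ v (f + g)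
  map_one : v 1 = 0

/-- Extension of a valuation to ideals: `v(a) = inf { v f : f ∈ a }`. -/
noncomputable def NatValuation.idealV {R : Type*} [CommRing R] (V : NatValuation R)
    (a : Ideal R) : ℕ∞ :=
  ⨅ f ∈ a, V.v f

/-!
The value of a sum of ideals is the minimum of their values, and `v(m^l) ≥ l·v(m) > v(a)`.
Hence `v(a + m^l) = v(a)`, while computing the same ideal as `b + m^l` gives
`min (v(b), v(m^l)) = v(a) < v(m^l)`, which forces `v(b) = v(a)`.
-/

namespace NatValuation

variable {R : Type*} [CommRing R] (V : NatValuation R)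

theorem idealV_le {a : Ideal R} {f : R} (hf : f ∈ a) : V.idealV a ≤ V.v f :=
  iInf₂_le f hf

theorem le_idealV {a : Ideal R} {x : ℕ∞} (h : ∀ f ∈ a, x ≤ V.v f) : x ≤ V.idealV a :=
  le_iInf₂ h

theorem idealV_antitone {a b : Ideal R} (h : a ≤ b) : V.idealV b ≤ V.idealV a :=
  V.le_idealV fun _ hf => V.idealV_le (h hf)

theorem idealV_add (a b : Ideal R) : V.idealV (a + b) = min (V.idealV a) (V.idealV b) := by
  refine le_antisymm (le_min (V.idealV_antitone le_sup_left) (V.idealV_antitone le_sup_right)) ?_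
  refine V.le_idealV fun f hf => ?_
  obtain ⟨x, hx, y, hy, rfl⟩ := Submodule.mem_sup.mp hf
  exact (min_le_min (V.idealV_le hx) (V.idealV_le hy)).trans (V.map_add x y)

theorem add_idealV_le_idealV_mul (a b : Ideal R) :
    V.idealV a + V.idealV b ≤ V.idealV (a * b) := by
  refine V.le_idealV fun f hf => ?_
  refine Submodule.mul_induction_on hf (fun x hx y hy => ?_) fun x y hx hy => ?_
  · rw [V.map_mul]
    exact add_le_add (V.idealV_le hx) (V.idealV_le hy)
  · exact (le_min hx hy).trans (V.map_add x y)

theorem mul_idealV_le_idealV_pow (a : Ideal R) (n : ℕ) :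
    (n : ℕ∞) * V.idealV a ≤ V.idealV (a ^ n) := by
  induction n with
  | zero => simp
  | succ n ih =>
    calc ((n + 1 : ℕ) : ℕ∞) * V.idealV a = n * V.idealV a + V.idealV a := by push_cast; ring
      _ ≤ V.idealV (a ^ n) + V.idealV a := add_le_add ih le_rfl
      _ ≤ V.idealV (a ^ (n + 1)) := pow_succ a n ▸ V.add_idealV_le_idealV_mul _ _

theorem idealV_eq_of_add_pow_eq {a b m : Ideal R} {l : ℕ} (hab : a + m ^ l = b + m ^ l)
    (hlt : V.idealV a < l * V.idealV m) : V.idealV a = V.idealV b := by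
  have ha : V.idealV a < V.idealV (m ^ l) := hlt.trans_le (V.mul_idealV_le_idealV_pow m l)
  have key := congrArg V.idealV hab
  rw [V.idealV_add, V.idealV_add, min_eq_left ha.le] at key
  rw [key] at ha ⊢
  exact min_eq_left ((min_lt_iff.mp ha).resolve_right (lt_irrefl _)).le

end NatValuation

theorem stmt_0_general {R : Type*} [CommRing R] [IsLocalRing R]
    (V : NatValuation R) (a b : Ideal R) (l : ℕ)
    (hab : a + (IsLocalRing.maximalIdeal R) ^ l = b + (IsLocalRing.maximalIdeal R) ^ l)
    (hlt : V.idealV a < (l : ℕ∞) * V.idealV (IsLocalRing.maximalIdeal R)) :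
    V.idealV a = V.idealV b :=
  V.idealV_eq_of_add_pow_eq hab hlt

/-- Ideal-adic invariance of order: if `a + m^l = b + m^l` and `v(a) < l·v(m)`,
then `v(a) = v(b)`. -/
theorem stmt_0 {R : Type*} [CommRing R] [IsNoetherianRing R] [IsLocalRing R]
    (V : NatValuation R) (a b : Ideal R) (l : ℕ) (hl : 0 < l)
    (hab : a + (IsLocalRing.maximalIdeal R) ^ l = b + (IsLocalRing.maximalIdeal R) ^ l)
    (hlt : V.idealV a < (l : ℕ∞) * V.idealV (IsLocalRing.maximalIdeal R)) :
    V.idealV a = V.idealV b :=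
  stmt_0_general V a b l hab hlt
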